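/- arXiv:2011.00528 — 6 statements merged into one kernel-verified Lean document; each statement's English description precedes it below -/
import Mathlib

section
/- (Bollobás set-pair inequality) Let (A_i, B_i) for i in a finite index set I be pairs of finite sets such that A_i ∩ B_i = ∅ for all i, and A_i ∩ B_j ≠ ∅ for all i ≠ j. Then the sum over i of 1 / C(|A_i| + |B_i|, |A_i|) is at most 1. -/
/-!
Induct on a finite ground set `U` containing every `A i ∪ B i`. For `x ∈ U`, the pairs
`(A i, B i \ {x})` with `x ∉ A i` again satisfy the hypotheses, on the smaller ground set
`U \ {x}`, so their weights sum to at most `1`. Summing these `|U|` inequalities and swapping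
the sums, a pair with `|A| = a`, `|B| = b ≥ 1` contributes exactly `|U| / C(a + b, a)`: each of
the `|U| - a - b` points outside `A ∪ B` leaves its weight unchanged, and each of the `b` points
of `B` raises it to `1 / C(a + b - 1, a) = (a + b) / (b · C(a + b, a))`.
-/

open Finset

namespace SetPair

theorem succ_div_choose_eq (a b : ℕ) :
    ((b + 1 : ℕ) : ℚ) / (a + b).choose a = ((a + b + 1 : ℕ) : ℚ) / (a + b + 1).choose a := by
  have hpos : ∀ n, a ≤ n → ((n.choose a : ℕ) : ℚ) ≠ 0 := fun n hn => by
    exact_mod_cast (Nat.choose_pos hn).ne'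
  rw [div_eq_div_iff (hpos _ (by omega)) (hpos _ (by omega))]
  have h := Nat.choose_mul_succ_eq (a + b) a
  rw [show a + b + 1 - a = b + 1 by omega] at h
  exact_mod_cast by linarith

variable {α I : Type*}

def weight (A B : Finset α) : ℚ := 1 / (#A + #B).choose #A

theorem weight_le_one (A B : Finset α) : weight A B ≤ 1 := by
  have h : 1 ≤ ((#A + #B).choose #A : ℚ) := by
    exact_mod_cast Nat.choose_pos (Nat.le_add_right _ _)
  exact div_le_one_of_le₀ h (by positivity)

variable [DecidableEq α]

theorem card_mul_weight_erase {A B : Finset α} {x : α} (hx : x ∈ B) :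
    (#B : ℚ) * weight A (B.erase x) = (#A + #B) * weight A B := by
  obtain ⟨b, hb⟩ : ∃ b, #B = b + 1 := Nat.exists_eq_add_one.2 (card_pos.2 ⟨x, hx⟩)
  have h := succ_div_choose_eq #A b
  simp only [weight, card_erase_of_mem hx, hb, Nat.add_sub_cancel, ← add_assoc] at h ⊢
  push_cast at h ⊢
  rw [mul_one_div, mul_one_div, h, add_assoc]

theorem sum_weight_erase_self (A : Finset α) {B : Finset α} (hB : B.Nonempty) :
    ∑ x ∈ B, weight A (B.erase x) = (#A + #B) * weight A B := by
  have hB0 : (#B : ℚ) ≠ 0 := by exact_mod_cast (card_pos.2 hB).ne'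
  rw [sum_congr rfl fun x hx => eq_div_of_mul_eq hB0
    ((mul_comm _ _).trans (card_mul_weight_erase hx)), sum_const, nsmul_eq_mul]
  field_simp

theorem sum_weight_erase {A B U : Finset α} (hAB : Disjoint A B) (hB : B.Nonempty)
    (hU : A ∪ B ⊆ U) :
    ∑ x ∈ U with x ∉ A, weight A (B.erase x) = #U * weight A B := by
  have hsplit : {x ∈ U | x ∉ A} = B ∪ (U \ (A ∪ B)) := by
    ext x
    have hxU : x ∈ B → x ∈ U := fun h => hU (mem_union_right A h)
    have hxA : x ∈ B → x ∉ A := fun h => disjoint_right.1 hAB h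
    simp only [mem_filter, mem_union, mem_sdiff]
    tauto
  have hcard : (#(U \ (A ∪ B)) : ℚ) = #U - (#A + #B) := by
    rw [card_sdiff_of_subset hU, card_union_of_disjoint hAB, Nat.cast_sub]
    · push_cast; ring
    · exact (card_union_of_disjoint hAB).symm.trans_le (card_le_card hU)
  rw [hsplit, sum_union (disjoint_sdiff.mono_left subset_union_right),
    sum_weight_erase_self A hB, sum_congr rfl fun x hx => by
      rw [erase_eq_of_notMem fun h => (mem_sdiff.1 hx).2 (mem_union_right _ h)],
    sum_const, nsmul_eq_mul, hcard]
  ring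

structure IsSystem (J : Finset I) (A B : I → Finset α) : Prop where
  disjoint : ∀ i ∈ J, Disjoint (A i) (B i)
  not_disjoint : ∀ i ∈ J, ∀ j ∈ J, i ≠ j → ¬Disjoint (A i) (B j)

namespace IsSystem

variable {J : Finset I} {A B : I → Finset α}

theorem nonempty_right (h : IsSystem J A B) (hJ : 1 < #J) {i : I} (hi : i ∈ J) :
    (B i).Nonempty := by
  obtain ⟨j, hj, hji⟩ := exists_mem_ne hJ i
  exact (not_disjoint_iff_nonempty_inter.1 (h.not_disjoint j hj i hi hji)).mono inter_subset_right

theorem filter_erase (h : IsSystem J A B) (x : α) :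
    IsSystem {i ∈ J | x ∉ A i} A (fun i => (B i).erase x) where
  disjoint i hi := (h.disjoint i (mem_filter.1 hi).1).mono_right (erase_subset _ _)
  not_disjoint i hi j hj hij := by
    rw [mem_filter] at hi hj
    obtain ⟨y, hy⟩ := not_disjoint_iff_nonempty_inter.1 (h.not_disjoint i hi.1 j hj.1 hij)
    rw [mem_inter] at hy
    refine not_disjoint_iff.2 ⟨y, hy.1, mem_erase.2 ⟨?_, hy.2⟩⟩
    rintro rfl
    exact hi.2 hy.1

theorem sum_weight_le_one (h : IsSystem J A B) {U : Finset α}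
    (hU : ∀ i ∈ J, A i ∪ B i ⊆ U) : ∑ i ∈ J, weight (A i) (B i) ≤ 1 := by
  induction U using Finset.strongInduction generalizing J B with
  | H U ih =>
  rcases le_or_gt #J 1 with hJ | hJ
  · calc ∑ i ∈ J, weight (A i) (B i) ≤ #J • (1 : ℚ) :=
          sum_le_card_nsmul _ _ _ fun i _ => weight_le_one _ _
      _ ≤ 1 := by simpa using hJ
  have hU0 : (0 : ℚ) < #U := by
    obtain ⟨i, hi⟩ := card_pos.1 (zero_lt_one.trans hJ)
    exact_mod_cast card_pos.2 ((h.nonempty_right hJ hi).mono (subset_union_right.trans (hU i hi)))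
  have link : ∀ x ∈ U, ∑ i ∈ J with x ∉ A i, weight (A i) ((B i).erase x) ≤ 1 := by
    intro x hx
    refine ih _ (erase_ssubset hx) (h.filter_erase x) fun i hi => ?_
    rw [mem_filter] at hi
    calc A i ∪ (B i).erase x = (A i ∪ B i).erase x := by
          rw [erase_union_distrib, erase_eq_of_notMem hi.2]
      _ ⊆ U.erase x := erase_subset_erase x (hU i hi.1)
  have count : ∑ x ∈ U, ∑ i ∈ J with x ∉ A i, weight (A i) ((B i).erase x) =
      #U * ∑ i ∈ J, weight (A i) (B i) := by
    rw [mul_sum, sum_comm' (t' := J) (s' := fun i => {x ∈ U | x ∉ A i})]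
    · exact sum_congr rfl fun i hi =>
        sum_weight_erase (h.disjoint i hi) (h.nonempty_right hJ hi) (hU i hi)
    · simp only [mem_filter]; tauto
  have hsum : (#U : ℚ) * ∑ i ∈ J, weight (A i) (B i) ≤ #U * 1 := by
    rw [← count, mul_one]
    simpa using sum_le_card_nsmul U _ 1 link
  exact le_of_mul_le_mul_left hsum hU0

end IsSystem

end SetPair

theorem stmt_5 {α : Type*} [DecidableEq α] {I : Type*} [Fintype I]
    (A B : I → Finset α)
    (hdisj : ∀ i, A i ∩ B i = ∅)
    (hcross : ∀ i j, i ≠ j → (A i ∩ B j).Nonempty) :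
    ∑ i, (1 : ℚ) / ((A i).card + (B i).card).choose (A i).card ≤ 1 :=
  SetPair.IsSystem.sum_weight_le_one (J := univ)
    ⟨fun i _ => disjoint_iff_inter_eq_empty.2 (hdisj i),
      fun i _ j _ hij => not_disjoint_iff_nonempty_inter.2 (hcross i j hij)⟩
    fun _ hi => subset_biUnion_of_mem (fun i => A i ∪ B i) hi
end

section
/- (Uniform Bollobás) Let (A_i, B_i) for i = 1, ..., m be pairs of finite sets with |A_i| ≤ a, |B_i| ≤ b for all i, A_i ∩ B_i = ∅ for all i, and A_i ∩ B_j ≠ ∅ for all i ≠ j. Then m ≤ C(a+b, a). -/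
/-!
The uniform bound follows from Bollobás' inequality `∑ᵢ 1 / C(aᵢ + bᵢ, aᵢ) ≤ 1`, proved by induction
on a ground set `X` containing all the sets. Deleting a point `x` keeps exactly the pairs with
`x ∉ Aᵢ` (with `x` removed from `Bᵢ`), which still form a cross-intersecting system on `X \ {x}`.
Summing these bounds over `x ∈ X` gives `#X · ∑ᵢ 1 / C(aᵢ + bᵢ, aᵢ) ≤ #X`, because
`bᵢ / C(aᵢ + bᵢ - 1, aᵢ) = (aᵢ + bᵢ) / C(aᵢ + bᵢ, aᵢ)`. That identity needs `bᵢ ≥ 1`; if some `Bᵢ`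
is empty, no other `Aⱼ` meets it, so the system is that single pair.
-/

open Finset

lemma Nat.add_choose_le_add_choose {a' b' a b : ℕ} (ha : a' ≤ a) (hb : b' ≤ b) :
    (a' + b').choose a' ≤ (a + b).choose a :=
  calc (a' + b').choose a' ≤ (a' + b).choose a' := Nat.choose_le_choose _ (by omega)
    _ = (a' + b).choose b := Nat.choose_symm_add
    _ ≤ (a + b).choose b := Nat.choose_le_choose _ (by omega)
    _ = (a + b).choose a := Nat.choose_symm_add.symm

lemma Nat.succ_mul_inv_choose_eq (a c : ℕ) :
    ((c + 1 : ℕ) : ℚ) * ((a + c).choose a : ℚ)⁻¹ =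
      ((a + (c + 1) : ℕ) : ℚ) * ((a + (c + 1)).choose a : ℚ)⁻¹ := by
  have h := Nat.choose_mul_succ_eq (a + c) a
  rw [show a + c + 1 - a = c + 1 by omega] at h
  have h0 : ((a + c).choose a : ℚ) ≠ 0 := by exact_mod_cast (Nat.choose_pos (by omega)).ne'
  have h1 : ((a + (c + 1)).choose a : ℚ) ≠ 0 := by exact_mod_cast (Nat.choose_pos (by omega)).ne'
  field_simp
  rw [← add_assoc]
  exact_mod_cast (mul_comm _ _).trans h.symm

section

variable {α : Type*} [DecidableEq α]

lemma sum_sdiff_inv_choose_card_add_card_erase {A B X : Finset α} (hA : A ⊆ X) (hB : B ⊆ X)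
    (hAB : Disjoint A B) (hB₀ : B.Nonempty) :
    ∑ x ∈ X \ A, ((#A + #(B.erase x)).choose #A : ℚ)⁻¹ =
      #X * ((#A + #B).choose #A : ℚ)⁻¹ := by
  obtain ⟨c, hc⟩ : ∃ c, #B = c + 1 := Nat.exists_eq_add_one.2 hB₀.card_pos
  have hsplit : X \ A = B ∪ X \ (A ∪ B) := by
    ext x
    simp only [mem_sdiff, mem_union]
    have hxA : x ∈ B → x ∉ A := fun h => disjoint_right.1 hAB h
    have hxX : x ∈ B → x ∈ X := fun h => hB h
    tauto
  have hdisj : Disjoint B (X \ (A ∪ B)) := disjoint_sdiff.mono_left subset_union_right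
  have hcard : #(X \ (A ∪ B)) + (#A + #B) = #X := by
    rw [← card_union_of_disjoint hAB, card_sdiff_add_card_eq_card (union_subset hA hB)]
  have hin : ∀ x ∈ B, ((#A + #(B.erase x)).choose #A : ℚ)⁻¹ = ((#A + c).choose #A : ℚ)⁻¹ :=
    fun x hx => by rw [card_erase_of_mem hx, hc, Nat.add_sub_cancel]
  have hout : ∀ x ∈ X \ (A ∪ B),
      ((#A + #(B.erase x)).choose #A : ℚ)⁻¹ = ((#A + #B).choose #A : ℚ)⁻¹ :=
    fun x hx => by rw [erase_eq_of_notMem fun h => (mem_sdiff.1 hx).2 (mem_union_right _ h)]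
  rw [hsplit, sum_union hdisj, sum_congr rfl hin, sum_congr rfl hout, sum_const, sum_const,
    nsmul_eq_mul, nsmul_eq_mul, hc, Nat.succ_mul_inv_choose_eq, ← hc, ← add_mul, ← Nat.cast_add,
    add_comm, hcard]

theorem bollobas_inequality_sum_inv_choose_of_subset (X : Finset α) {ι : Type*} [Fintype ι]
    (A B : ι → Finset α) (hAX : ∀ i, A i ⊆ X) (hBX : ∀ i, B i ⊆ X)
    (hAB : ∀ i, Disjoint (A i) (B i)) (hcross : ∀ i j, i ≠ j → (A i ∩ B j).Nonempty) :
    ∑ i, ((#(A i) + #(B i)).choose #(A i) : ℚ)⁻¹ ≤ 1 := by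
  induction X using Finset.strongInduction generalizing ι with
  | H X ih =>
  by_cases hB₀ : ∃ i₀, B i₀ = ∅
  · obtain ⟨i₀, hi₀⟩ := hB₀
    have hsingle : ∀ i ≠ i₀, ((#(A i) + #(B i)).choose #(A i) : ℚ)⁻¹ = 0 := fun i hi => by
      simpa [hi₀] using hcross i i₀ hi
    rw [Fintype.sum_eq_single i₀ hsingle, hi₀, card_empty, add_zero, Nat.choose_self,
      Nat.cast_one, inv_one]
  simp only [not_exists, ← nonempty_iff_ne_empty] at hB₀
  rcases isEmpty_or_nonempty ι with hι | ⟨⟨i₁⟩⟩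
  · simp
  have hX : (0 : ℚ) < #X := by exact_mod_cast card_pos.2 ((hB₀ i₁).mono (hBX i₁))
  have hdel : ∀ x ∈ X, ∑ i with x ∉ A i,
      ((#(A i) + #((B i).erase x)).choose #(A i) : ℚ)⁻¹ ≤ 1 := fun x hx => by
    rw [sum_subtype _ (p := fun i => x ∉ A i) (by simp)]
    refine ih (X.erase x) (erase_ssubset hx) (fun i : {i // x ∉ A i} => A i)
      (fun i => (B i).erase x) (fun i => ?_) (fun i => erase_subset_erase x (hBX i))
      (fun i => (hAB i).mono_right (erase_subset x _)) (fun i j hij => ?_)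
    · exact subset_erase.2 ⟨hAX i, i.2⟩
    · obtain ⟨y, hy⟩ := hcross i j (Subtype.coe_injective.ne hij)
      refine ⟨y, ?_⟩
      rw [mem_inter] at hy ⊢
      exact ⟨hy.1, mem_erase.2 ⟨fun h => i.2 (h ▸ hy.1), hy.2⟩⟩
  have key : (#X : ℚ) * ∑ i, ((#(A i) + #(B i)).choose #(A i) : ℚ)⁻¹ ≤ #X * 1 := by
    calc (#X : ℚ) * ∑ i, ((#(A i) + #(B i)).choose #(A i) : ℚ)⁻¹
        = ∑ i, ∑ x ∈ X \ A i, ((#(A i) + #((B i).erase x)).choose #(A i) : ℚ)⁻¹ := by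
          rw [mul_sum]
          exact sum_congr rfl fun i _ =>
            (sum_sdiff_inv_choose_card_add_card_erase (hAX i) (hBX i) (hAB i) (hB₀ i)).symm
      _ = ∑ x ∈ X, ∑ i with x ∉ A i, ((#(A i) + #((B i).erase x)).choose #(A i) : ℚ)⁻¹ :=
          sum_comm' fun i x => by simp only [mem_univ, true_and, mem_filter, mem_sdiff, and_comm]
      _ ≤ ∑ x ∈ X, 1 := sum_le_sum hdel
      _ = #X * 1 := by simp
  exact le_of_mul_le_mul_left key hX

theorem bollobas_inequality_sum_inv_choose {ι : Type*} [Fintype ι] (A B : ι → Finset α)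
    (hAB : ∀ i, Disjoint (A i) (B i)) (hcross : ∀ i j, i ≠ j → (A i ∩ B j).Nonempty) :
    ∑ i, ((#(A i) + #(B i)).choose #(A i) : ℚ)⁻¹ ≤ 1 :=
  bollobas_inequality_sum_inv_choose_of_subset (univ.biUnion fun i => A i ∪ B i) A B
    (fun i => subset_union_left.trans (subset_biUnion_of_mem (fun i => A i ∪ B i) (mem_univ i)))
    (fun i => subset_union_right.trans (subset_biUnion_of_mem (fun i => A i ∪ B i) (mem_univ i)))
    hAB hcross

theorem bollobas_inequality_card_le_choose {ι : Type*} [Fintype ι] {a b : ℕ} (A B : ι → Finset α)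
    (hA : ∀ i, #(A i) ≤ a) (hB : ∀ i, #(B i) ≤ b)
    (hAB : ∀ i, Disjoint (A i) (B i)) (hcross : ∀ i j, i ≠ j → (A i ∩ B j).Nonempty) :
    Fintype.card ι ≤ (a + b).choose a := by
  have hpos : (0 : ℚ) < (a + b).choose a := by exact_mod_cast Nat.choose_pos (by omega)
  have hterm : ∀ i, ((a + b).choose a : ℚ)⁻¹ ≤ ((#(A i) + #(B i)).choose #(A i) : ℚ)⁻¹ :=
    fun i => inv_anti₀ (by exact_mod_cast Nat.choose_pos (by omega))
      (by exact_mod_cast Nat.add_choose_le_add_choose (hA i) (hB i))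
  have hsum : (Fintype.card ι : ℚ) * ((a + b).choose a : ℚ)⁻¹ ≤ 1 :=
    calc (Fintype.card ι : ℚ) * ((a + b).choose a : ℚ)⁻¹
        = ∑ _i : ι, ((a + b).choose a : ℚ)⁻¹ := by rw [sum_const, card_univ, nsmul_eq_mul]
      _ ≤ ∑ i, ((#(A i) + #(B i)).choose #(A i) : ℚ)⁻¹ := sum_le_sum fun i _ => hterm i
      _ ≤ 1 := bollobas_inequality_sum_inv_choose A B hAB hcross
  rw [← div_eq_mul_inv, div_le_one hpos] at hsum
  exact_mod_cast hsum

end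

theorem stmt_6 {α : Type*} [DecidableEq α] {m a b : ℕ}
    (A B : Fin m → Finset α)
    (hA : ∀ i, (A i).card ≤ a) (hB : ∀ i, (B i).card ≤ b)
    (hdisj : ∀ i, A i ∩ B i = ∅)
    (hcross : ∀ i j, i ≠ j → (A i ∩ B j).Nonempty) :
    m ≤ (a + b).choose a := by
  simpa using bollobas_inequality_card_le_choose A B hA hB
    (fun i => disjoint_iff_inter_eq_empty.2 (hdisj i)) hcross
end

section
/- Let {(A_i, B_i)}_{i=1}^m be a 1-cross intersecting set pair system with |A_i| ≤ 2 and |B_i| ≤ 2 for every i. Then m ≤ 5. -/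
section aux

variable {α : Type*} [DecidableEq α]

private lemma three_of_card {β : Type*} [DecidableEq β] {s : Finset β} (h : 2 < s.card) :
    ∃ a ∈ s, ∃ b ∈ s, ∃ c ∈ s, a ≠ b ∧ a ≠ c ∧ b ≠ c := by
  have h0 : 0 < s.card := by omega
  obtain ⟨a, ha⟩ := Finset.card_pos.mp h0
  have h2 : 1 < (s.erase a).card := by
    have := Finset.card_erase_of_mem ha; omega
  obtain ⟨b, hb, c, hc, hbc⟩ := Finset.one_lt_card.mp h2
  exact ⟨a, ha, b, Finset.mem_of_mem_erase hb, c, Finset.mem_of_mem_erase hc,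
    (Finset.ne_of_mem_erase hb).symm, (Finset.ne_of_mem_erase hc).symm, hbc⟩

/-- If `(Ap ∩ Bq).card = 1` etc., extract the second element of `Bq`. -/
private lemma getY {x : α} {Ap Ap' Bq : Finset α}
    (hxq : x ∈ Bq) (hxp : x ∉ Ap) (hxp' : x ∉ Ap') (hq2 : Bq.card ≤ 2)
    (h1 : (Ap ∩ Bq).card = 1) (h1' : (Ap' ∩ Bq).card = 1) :
    ∃ y, y ≠ x ∧ Bq = {x, y} ∧ y ∈ Ap ∧ y ∈ Ap' := by
  obtain ⟨y, hy⟩ := Finset.card_eq_one.mp h1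
  have hyAp : y ∈ Ap := (Finset.mem_inter.mp (hy ▸ Finset.mem_singleton_self y)).1
  have hyBq : y ∈ Bq := (Finset.mem_inter.mp (hy ▸ Finset.mem_singleton_self y)).2
  have hyx : y ≠ x := fun h => hxp (h ▸ hyAp)
  have hBq : Bq = {x, y} := by
    refine (Finset.eq_of_subset_of_card_le ?_ ?_).symm
    · intro z hz
      rcases Finset.mem_insert.mp hz with h | h
      · exact h ▸ hxq
      · exact (Finset.mem_singleton.mp h) ▸ hyBq
    · calc Bq.card ≤ 2 := hq2
        _ = ({x, y} : Finset α).card := by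
          rw [Finset.card_insert_of_notMem (by simp [Ne.symm hyx]), Finset.card_singleton]
  -- now show y ∈ Ap'
  obtain ⟨z, hz⟩ := Finset.card_eq_one.mp h1'
  have hzAp' : z ∈ Ap' := (Finset.mem_inter.mp (hz ▸ Finset.mem_singleton_self z)).1
  have hzBq : z ∈ Bq := (Finset.mem_inter.mp (hz ▸ Finset.mem_singleton_self z)).2
  have : z = y := by
    rw [hBq] at hzBq
    rcases Finset.mem_insert.mp hzBq with h | h
    · exact absurd (h ▸ hzAp') hxp'
    · exact Finset.mem_singleton.mp h
  exact ⟨y, hyx, hBq, hyAp, this ▸ hzAp'⟩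

/-- A 2-element set meets a set in exactly one point iff exactly one endpoint is in. -/
private lemma pair_inter_card_one {a b : α} (hab : a ≠ b) {s : Finset α}
    (h : (({a, b} : Finset α) ∩ s).card = 1) : a ∈ s ↔ b ∉ s := by
  rw [← Finset.filter_mem_eq_inter] at h
  by_cases ha : a ∈ s <;> by_cases hb : b ∈ s <;>
    simp [Finset.filter_insert, Finset.filter_singleton, ha, hb, hab,
      Finset.card_insert_of_notMem] at h ⊢

private lemma six {x : α} {B0 Aj Bj Ak Bk Al Bl : Finset α}
    (hAj2 : Aj.card ≤ 2) (hAk2 : Ak.card ≤ 2) (hAl2 : Al.card ≤ 2)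
    (hBj2 : Bj.card ≤ 2) (hBk2 : Bk.card ≤ 2) (hBl2 : Bl.card ≤ 2)
    (hdj : Aj ∩ Bj = ∅) (hdk : Ak ∩ Bk = ∅) (hdl : Al ∩ Bl = ∅)
    (hxj : x ∈ Bj) (hxk : x ∈ Bk) (hxl : x ∈ Bl)
    (cjk : (Aj ∩ Bk).card = 1) (cjl : (Aj ∩ Bl).card = 1)
    (ckj : (Ak ∩ Bj).card = 1) (ckl : (Ak ∩ Bl).card = 1)
    (clj : (Al ∩ Bj).card = 1) (clk : (Al ∩ Bk).card = 1)
    (cj0 : (Aj ∩ B0).card = 1) (ck0 : (Ak ∩ B0).card = 1) (cl0 : (Al ∩ B0).card = 1) :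
    False := by
  have hxAj : x ∉ Aj := fun h => (Finset.notMem_empty x) (hdj ▸ Finset.mem_inter.mpr ⟨h, hxj⟩)
  have hxAk : x ∉ Ak := fun h => (Finset.notMem_empty x) (hdk ▸ Finset.mem_inter.mpr ⟨h, hxk⟩)
  have hxAl : x ∉ Al := fun h => (Finset.notMem_empty x) (hdl ▸ Finset.mem_inter.mpr ⟨h, hxl⟩)
  obtain ⟨yj, hyjx, hBj, hyjAk, hyjAl⟩ := getY hxj hxAk hxAl hBj2 ckj clj
  obtain ⟨yk, hykx, hBk, hykAj, hykAl⟩ := getY hxk hxAj hxAl hBk2 cjk clk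
  obtain ⟨yl, hylx, hBl, hylAj, hylAk⟩ := getY hxl hxAj hxAk hBl2 cjl ckl
  -- distinctness
  have hne : ∀ (p q : α) (Ap Bp Bq : Finset α), Bp = {x, p} → Bq = {x, q} →
      x ∉ Ap → Ap ∩ Bp = ∅ → (Ap ∩ Bq).card = 1 → p ≠ q := by
    intro p q Ap Bp Bq hBp hBq hxAp hd hc hpq
    obtain ⟨z, hz⟩ := Finset.card_eq_one.mp hc
    have hzAp : z ∈ Ap := (Finset.mem_inter.mp (hz ▸ Finset.mem_singleton_self z)).1
    have hzBq : z ∈ Bq := (Finset.mem_inter.mp (hz ▸ Finset.mem_singleton_self z)).2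
    rw [hBq] at hzBq
    rcases Finset.mem_insert.mp hzBq with h | h
    · exact hxAp (h ▸ hzAp)
    · have hzq : z = q := Finset.mem_singleton.mp h
      have : z ∈ Bp := by rw [hBp]; simp [hzq, hpq.symm]
      exact (Finset.notMem_empty z) (hd ▸ Finset.mem_inter.mpr ⟨hzAp, this⟩)
  have hjk : yj ≠ yk := hne yj yk Aj Bj Bk hBj hBk hxAj hdj cjk
  have hjl : yj ≠ yl := hne yj yl Aj Bj Bl hBj hBl hxAj hdj cjl
  have hkl : yk ≠ yl := hne yk yl Ak Bk Bl hBk hBl hxAk hdk ckl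
  -- Aj = {yk, yl} etc.
  have pairEq : ∀ (p q : α) (S : Finset α), p ≠ q → p ∈ S → q ∈ S → S.card ≤ 2 →
      S = {p, q} := by
    intro p q S hpq hp hq hS
    refine (Finset.eq_of_subset_of_card_le ?_ ?_).symm
    · intro z hz
      rcases Finset.mem_insert.mp hz with h | h
      · exact h ▸ hp
      · exact (Finset.mem_singleton.mp h) ▸ hq
    · rw [Finset.card_insert_of_notMem (by simp [hpq]), Finset.card_singleton]; exact hS
  have hAj : Aj = {yk, yl} := pairEq yk yl Aj hkl hykAj hylAj hAj2
  have hAk : Ak = {yj, yl} := pairEq yj yl Ak hjl hyjAk hylAk hAk2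
  have hAl : Al = {yj, yk} := pairEq yj yk Al hjk hyjAl hykAl hAl2
  have e1 := pair_inter_card_one hkl (hAj ▸ cj0)
  have e2 := pair_inter_card_one hjl (hAk ▸ ck0)
  have e3 := pair_inter_card_one hjk (hAl ▸ cl0)
  tauto

end aux

theorem stmt_9 {α : Type*} [DecidableEq α] {m : ℕ}
    (A B : Fin m → Finset α)
    (hA : ∀ i, (A i).card ≤ 2) (hB : ∀ i, (B i).card ≤ 2)
    (hdisj : ∀ i, A i ∩ B i = ∅)
    (hcross : ∀ i j, i ≠ j → (A i ∩ B j).card = 1) :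
    m ≤ 5 := by
  by_contra hm
  have hm6 : 6 ≤ m := by omega
  set i0 : Fin m := ⟨0, by omega⟩ with hi0
  set i1 : Fin m := ⟨1, by omega⟩ with hi1
  have h01 : i0 ≠ i1 := by simp [hi0, hi1, Fin.ext_iff]
  have hA0ne : (A i0).Nonempty := by
    obtain ⟨y, hy⟩ := Finset.card_eq_one.mp (hcross i0 i1 h01)
    exact ⟨y, (Finset.mem_inter.mp (hy ▸ Finset.mem_singleton_self y)).1⟩
  classical
  set f : Fin m → α := fun j =>
    if h : (A i0 ∩ B j).Nonempty then h.choose else hA0ne.choose with hf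
  have hfmem : ∀ j : Fin m, j ≠ i0 → f j ∈ A i0 ∩ B j := by
    intro j hj
    have h : (A i0 ∩ B j).Nonempty :=
      Finset.card_pos.mp (by rw [hcross i0 j (Ne.symm hj)]; omega)
    simp only [hf, dif_pos h]
    exact h.choose_spec
  set s : Finset (Fin m) := Finset.univ.erase i0 with hs
  have hscard : s.card = m - 1 := by
    rw [hs, Finset.card_erase_of_mem (Finset.mem_univ _), Finset.card_univ, Fintype.card_fin]
  have hmaps : ∀ j ∈ s, f j ∈ A i0 := by
    intro j hj
    exact (Finset.mem_inter.mp (hfmem j (Finset.ne_of_mem_erase hj))).1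
  have hlt : (A i0).card * 2 < s.card := by
    have := hA i0; omega
  obtain ⟨x, hxA0, hxcard⟩ := Finset.exists_lt_card_fiber_of_mul_lt_card_of_maps_to hmaps hlt
  obtain ⟨j, hj, k, hk, l, hl, hjk, hjl, hkl⟩ := three_of_card hxcard
  simp only [Finset.mem_filter] at hj hk hl
  have hxB : ∀ p : Fin m, p ∈ Finset.filter (fun x_1 => f x_1 = x) s → p ≠ i0 ∧ x ∈ B p := by
    intro p hp
    rw [Finset.mem_filter] at hp
    have hpne : p ≠ i0 := Finset.ne_of_mem_erase hp.1
    exact ⟨hpne, hp.2 ▸ (Finset.mem_inter.mp (hfmem p hpne)).2⟩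
  obtain ⟨hj0, hxj⟩ := hxB j (by simp [hj])
  obtain ⟨hk0, hxk⟩ := hxB k (by simp [hk])
  obtain ⟨hl0, hxl⟩ := hxB l (by simp [hl])
  exact six (hA j) (hA k) (hA l) (hB j) (hB k) (hB l)
    (hdisj j) (hdisj k) (hdisj l) hxj hxk hxl
    (hcross j k hjk) (hcross j l hjl) (hcross k j hjk.symm) (hcross k l hkl)
    (hcross l j hjl.symm) (hcross l k hkl.symm)
    (hcross j i0 hj0) (hcross k i0 hk0) (hcross l i0 hl0)
end

section
/- (Reduction lemma) Let S = {(A_i, B_i)}_{i ∈ I} be a 1-cross intersecting set pair system and let R be a set of elements such that there are no v ∈ R and distinct i, j ∈ I with v ∈ A_i ∩ B_j. Then the reduced system {(A_i \ R, B_i \ R)}_{i ∈ I} is also 1-cross intersecting. -/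
theorem stmt_10 {α : Type*} [DecidableEq α] {I : Type*}
    (A B : I → Finset α) (R : Finset α)
    (hdisj : ∀ i, A i ∩ B i = ∅)
    (hcross : ∀ i j, i ≠ j → (A i ∩ B j).card = 1)
    (hR : ¬∃ v ∈ R, ∃ i j, i ≠ j ∧ v ∈ A i ∩ B j) :
    (∀ i, (A i \ R) ∩ (B i \ R) = ∅) ∧
    (∀ i j, i ≠ j → ((A i \ R) ∩ (B j \ R)).card = 1) := by
  push_neg at hR
  constructor
  · intro i
    ext x
    simp only [Finset.mem_inter, Finset.mem_sdiff, Finset.notMem_empty, iff_false]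
    rintro ⟨⟨hA, _⟩, ⟨hB, _⟩⟩
    have := hdisj i
    have : x ∈ A i ∩ B i := Finset.mem_inter.mpr ⟨hA, hB⟩
    simp [hdisj i] at this
  · intro i j hij
    have : (A i \ R) ∩ (B j \ R) = A i ∩ B j := by
      ext x
      simp only [Finset.mem_inter, Finset.mem_sdiff]
      constructor
      · rintro ⟨⟨hA, _⟩, ⟨hB, _⟩⟩; exact ⟨hA, hB⟩
      · rintro ⟨hA, hB⟩
        have hxR : x ∉ R := fun hx => hR x hx i j hij (Finset.mem_inter.mpr ⟨hA, hB⟩)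
        exact ⟨⟨hA, hxR⟩, ⟨hB, hxR⟩⟩
    rw [this]; exact hcross i j hij
end

section
/- (Averaging identity) Let S = {(A_i, B_i)}_{i ∈ I} be a set pair system over a finite ground set V = ⋃_{i∈I}(A_i ∪ B_i), with A_i ≠ ∅, B_i ≠ ∅, and A_i ∩ B_i = ∅ for every i ∈ I. Define Σ(S) = Σ_{i∈I} 1 / C(|A_i| + |B_i|, |A_i|). For v ∈ V let S_v be the system {(A_i, B_i \ {v})}_{i ∈ I, v ∉ A_i}, so that Σ(S_v) = Σ_{i: v ∉ A_i} 1 / C(|A_i| + |B_i \ {v}|, |A_i|). Then |V| · Σ(S) = Σ_{v ∈ V} Σ(S_v). -/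
open Finset in
theorem stmt_11 {α : Type*} [DecidableEq α] {I : Type*} [Fintype I] [DecidableEq I]
    (A B : I → Finset α)
    (hAne : ∀ i, (A i).Nonempty) (hBne : ∀ i, (B i).Nonempty)
    (hdisj : ∀ i, A i ∩ B i = ∅) :
    ((Finset.univ.biUnion (fun i => A i ∪ B i)).card : ℚ) *
        ∑ i, (1 : ℚ) / ((A i).card + (B i).card).choose (A i).card
      = ∑ v ∈ Finset.univ.biUnion (fun i => A i ∪ B i),
          ∑ i ∈ Finset.univ.filter (fun i => v ∉ A i),
            (1 : ℚ) / ((A i).card + ((B i).erase v).card).choose (A i).card := by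
  classical
  set V := Finset.univ.biUnion (fun i => A i ∪ B i) with hV
  have hsub : ∀ i, A i ∪ B i ⊆ V := fun i =>
    Finset.subset_biUnion_of_mem (fun i => A i ∪ B i) (Finset.mem_univ i)
  have key : ∀ i : I, (V.card : ℚ) * (1 / ((A i).card + (B i).card).choose (A i).card)
      = ∑ v ∈ V.filter (fun v => v ∉ A i),
          (1:ℚ)/((A i).card + ((B i).erase v).card).choose (A i).card := by
    intro i
    set a := (A i).card
    set b := (B i).card
    have hb1 : 1 ≤ b := Finset.card_pos.mpr (hBne i)
    have hBsub : B i ⊆ V.filter (fun v => v ∉ A i) := by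
      intro v hv
      simp only [Finset.mem_filter]
      refine ⟨hsub i (Finset.mem_union_right _ hv), fun hA => ?_⟩
      have : v ∈ A i ∩ B i := Finset.mem_inter.mpr ⟨hA, hv⟩
      simp [hdisj i] at this
    have hfilter : V.filter (fun v => v ∉ A i) = V \ A i := by
      ext v; simp [Finset.mem_sdiff]
    have hAV : A i ⊆ V := fun v hv => hsub i (Finset.mem_union_left _ hv)
    have hcardf : (V.filter (fun v => v ∉ A i)).card = V.card - a := by
      rw [hfilter, Finset.card_sdiff_of_subset hAV]
    have hab : a + b ≤ V.card := by
      have : (A i ∪ B i).card = a + b := by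
        rw [Finset.card_union_of_disjoint (Finset.disjoint_iff_inter_eq_empty.mpr (hdisj i))]
      rw [← this]
      exact Finset.card_le_card (hsub i)
    rw [← Finset.sum_sdiff hBsub]
    have h1 : ∀ v ∈ V.filter (fun v => v ∉ A i) \ B i,
        (1:ℚ)/((a + ((B i).erase v).card).choose a)
          = 1/((a + b).choose a) := by
      intro v hv
      have : v ∉ B i := (Finset.mem_sdiff.mp hv).2
      rw [Finset.erase_eq_of_notMem this]
    have h2 : ∀ v ∈ B i,
        (1:ℚ)/((a + ((B i).erase v).card).choose a)
          = 1/((a + (b-1)).choose a) := by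
      intro v hv
      rw [Finset.card_erase_of_mem hv]
    rw [Finset.sum_congr rfl h1, Finset.sum_congr rfl h2, Finset.sum_const,
      Finset.sum_const, Finset.card_sdiff_of_subset hBsub, hcardf]
    -- now arithmetic
    have hch : (a + b) * (a + (b-1)).choose a = (a+b).choose a * b := by
      have h := Nat.add_one_mul_choose_eq (a+(b-1)) (b-1)
      have e1 : a + (b-1) + 1 = a + b := by omega
      have e2 : b - 1 + 1 = b := by omega
      replace h := h
      rw [e1, e2, ← Nat.choose_symm_add (a := a) (b := b-1),
        ← Nat.choose_symm_add (a := a) (b := b)] at h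
      exact h
    have hC1 : ((a+b).choose a : ℚ) ≠ 0 := by
      exact_mod_cast (Nat.choose_pos (Nat.le_add_right a b)).ne'
    have hC0 : ((a + (b-1)).choose a : ℚ) ≠ 0 := by
      exact_mod_cast (Nat.choose_pos (Nat.le_add_right a (b-1))).ne'
    have h1 : a ≤ V.card := le_trans (Nat.le_add_right a b) hab
    have h2 : b ≤ V.card - a := by omega
    rw [nsmul_eq_mul, nsmul_eq_mul, Nat.cast_sub h2, Nat.cast_sub h1]
    have hchQ : ((a:ℚ) + b) * ((a + (b-1)).choose a : ℚ) = ((a+b).choose a : ℚ) * b := by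
      exact_mod_cast hch
    have e : (b:ℚ) * (1/((a+(b-1)).choose a : ℚ)) = ((a:ℚ)+b) * (1/((a+b).choose a : ℚ)) := by
      rw [mul_one_div, mul_one_div, div_eq_div_iff hC0 hC1]
      linear_combination -hchQ
    rw [e]
    ring
  calc (V.card : ℚ) * ∑ i, (1 : ℚ) / ((A i).card + (B i).card).choose (A i).card
      = ∑ i, (V.card : ℚ) * (1 / ((A i).card + (B i).card).choose (A i).card) := by
        rw [Finset.mul_sum]
    _ = ∑ i, ∑ v ∈ V.filter (fun v => v ∉ A i),
          (1:ℚ)/((A i).card + ((B i).erase v).card).choose (A i).card :=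
        Finset.sum_congr rfl (fun i _ => key i)
    _ = ∑ i, ∑ v ∈ V, if v ∉ A i then
          (1:ℚ)/((A i).card + ((B i).erase v).card).choose (A i).card else 0 := by
        simp [Finset.sum_filter]
    _ = ∑ v ∈ V, ∑ i, if v ∉ A i then
          (1:ℚ)/((A i).card + ((B i).erase v).card).choose (A i).card else 0 :=
        Finset.sum_comm
    _ = _ := by
        refine Finset.sum_congr rfl fun v _ => ?_
        simp [Finset.sum_filter]
end

section
/- Let {(A_i, B_i)}_{i∈I} be a 1-cross intersecting set pair system containing five indices i with |A_i| = |B_i| = 2 whose size-2 pairs form two complementary 5-cycles (A_i = {v_i, v_{i+1}}, B_i = {v_{i-1}, v_{i+2}} on vertices v_0,...,v_4, indices mod 5). Then I consists exactly of these five indices; i.e., no additional pair (A, B) with A ∩ B = ∅ can satisfy |A ∩ B_i| = 1 and |A_i ∩ B| = 1 for all five i. -/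
lemma pair_inter_one {α : Type*} [DecidableEq α] {a b : α} (hab : a ≠ b)
    {S : Finset α} (h : (({a, b} : Finset α) ∩ S).card = 1) :
    (a ∈ S) ↔ ¬ (b ∈ S) := by
  by_cases ha : a ∈ S <;> by_cases hb : b ∈ S <;>
    simp_all [Finset.insert_inter_of_mem, Finset.insert_inter_of_notMem,
      Finset.singleton_inter_of_mem, Finset.singleton_inter_of_notMem,
      Finset.card_insert_of_notMem, hab]

theorem stmt_17 {α : Type*} [DecidableEq α] {I : Type*}
    (A B : I → Finset α)
    (hdisj : ∀ i, A i ∩ B i = ∅)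
    (hcross : ∀ i j, i ≠ j → (A i ∩ B j).card = 1)
    (v : ZMod 5 → α) (hv : Function.Injective v)
    (f : ZMod 5 → I) (hf : Function.Injective f)
    (hA : ∀ k, A (f k) = {v k, v (k + 1)})
    (hB : ∀ k, B (f k) = {v (k - 1), v (k + 2)}) :
    ∀ i : I, ∃ k, i = f k := by
  intro i
  by_contra h
  push_neg at h
  have hstep : ∀ k : ZMod 5, (v k ∈ B i) ↔ ¬ (v (k + 1) ∈ B i) := by
    intro k
    have hne : f k ≠ i := fun e => h k e.symm
    have hc := hcross (f k) i hne
    rw [hA k] at hc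
    exact pair_inter_one (fun e => by
      have := hv e
      simp at this
      exact absurd this (by decide)) hc
  have h0 := hstep 0
  have h1 := hstep 1
  have h2 := hstep 2
  have h3 := hstep 3
  have h4 := hstep 4
  rw [show (0 : ZMod 5) + 1 = 1 from by decide] at h0
  rw [show (1 : ZMod 5) + 1 = 2 from by decide] at h1
  rw [show (2 : ZMod 5) + 1 = 3 from by decide] at h2
  rw [show (3 : ZMod 5) + 1 = 4 from by decide] at h3
  rw [show (4 : ZMod 5) + 1 = 0 from by decide] at h4
  tauto
end
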